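/- arXiv:1206.1566 — 7 statements merged into one kernel-verified Lean document; each statement's English description precedes it below -/
import Mathlib

section
/- Let α : (Fin n → ZMod 2) → ℝ be a family of real coefficients and set A := Σ_V α V • S V ∈ M. Then A² = 1 if and only if Σ_V (α V)² = 1 and, for every U ∈ (Fin n → ZMod 2) with U ≠ 0, Σ_V α V * α (V + U) = 0. -/
/-!
Since `S V * S W = S (V + W)`, squaring `∑ α V • S V` gives `∑ U, c U • S U` with the
convolution `c U = ∑ V, α V * α (U - V)`, while `1 = S 0`. By linear independence of the `S U`,
`A ^ 2 = 1` amounts to `c 0 = 1` and `c U = 0` for `U ≠ 0`; in `(ZMod 2)ⁿ`, `U - V = V + U`.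
-/

open Finset

section GroupAlgebra

variable {R M G : Type*} [CommSemiring R] [Semiring M] [Algebra R M]
  [AddCommGroup G] [Fintype G] {S : G → M}

theorem sum_smul_mul_sum_smul (hS : ∀ U V, S (U + V) = S U * S V) (α β : G → R) :
    (∑ V, α V • S V) * (∑ W, β W • S W) = ∑ U, (∑ V, α V * β (U - V)) • S U := by
  have row : ∀ V, ∑ W, (α V • S V) * (β W • S W) = ∑ U, (α V * β (U - V)) • S U := fun V =>
    Fintype.sum_equiv (Equiv.addLeft V) _ _ fun W => by
      simp only [Equiv.coe_addLeft, smul_mul_smul_comm, ← hS, add_sub_cancel_left]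
  rw [sum_mul_sum, Fintype.sum_congr _ _ row, sum_comm]
  simp only [sum_smul]

theorem sum_smul_pi_single_zero [DecidableEq G] (hS0 : S 0 = 1) :
    ∑ U, (Pi.single 0 1 : G → R) U • S U = 1 := by
  simp [Pi.single_apply, hS0]

theorem sum_smul_sq_eq_one_iff [DecidableEq G] (hS0 : S 0 = 1)
    (hS : ∀ U V, S (U + V) = S U * S V) (hind : LinearIndependent R S) (α : G → R) :
    (∑ V, α V • S V) ^ 2 = 1 ↔ ∀ U, ∑ V, α V * α (U - V) = (Pi.single 0 1 : G → R) U := by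
  rw [sq, sum_smul_mul_sum_smul hS, ← sum_smul_pi_single_zero (R := R) hS0]
  refine ⟨Fintype.linearIndependent_iffₛ.mp hind _ _, fun h => ?_⟩
  simp only [h]

end GroupAlgebra

theorem forall_eq_pi_single_iff {ι N : Type*} [DecidableEq ι] [Zero N] (f : ι → N) (i : ι)
    (x : N) : (∀ j, f j = (Pi.single i x : ι → N) j) ↔ f i = x ∧ ∀ j, j ≠ i → f j = 0 := by
  refine ⟨fun h => ⟨by simpa using h i, fun j hj => by simpa [hj] using h j⟩, ?_⟩
  rintro ⟨hi, h⟩ j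
  by_cases hj : j = i
  · simp [hj, hi]
  · simp [hj, h j hj]

theorem stmt_0_general {n : ℕ} {M : Type*} [Ring M] [Algebra ℝ M]
    (S : (Fin n → ZMod 2) → M)
    (hS0 : S 0 = 1)
    (hSmul : ∀ U V : Fin n → ZMod 2, S (U + V) = S U * S V)
    (hind : LinearIndependent ℝ S)
    (α : (Fin n → ZMod 2) → ℝ)
    (A : M) (hA : A = ∑ V : Fin n → ZMod 2, α V • S V) :
    A ^ 2 = 1 ↔
      ((∑ V : Fin n → ZMod 2, (α V) ^ 2) = 1 ∧
        ∀ U : Fin n → ZMod 2, U ≠ 0 →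
          (∑ V : Fin n → ZMod 2, α V * α (V + U)) = 0) := by
  have hsub : ∀ U V : Fin n → ZMod 2, U - V = V + U := fun U V =>
    funext fun i => by simp only [Pi.sub_apply, Pi.add_apply, CharTwo.sub_eq_add, add_comm]
  rw [hA, sum_smul_sq_eq_one_iff hS0 hSmul hind, forall_eq_pi_single_iff]
  simp only [hsub, add_zero, sq]

theorem stmt_0 {n : ℕ} (hn : 1 ≤ n) {M : Type*} [Ring M] [Algebra ℝ M]
    (S : (Fin n → ZMod 2) → M)
    (hS0 : S 0 = 1)
    (hSmul : ∀ U V : Fin n → ZMod 2, S (U + V) = S U * S V)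
    (hind : LinearIndependent ℝ S)
    (α : (Fin n → ZMod 2) → ℝ)
    (A : M) (hA : A = ∑ V : Fin n → ZMod 2, α V • S V) :
    A ^ 2 = 1 ↔
      ((∑ V : Fin n → ZMod 2, (α V) ^ 2) = 1 ∧
        ∀ U : Fin n → ZMod 2, U ≠ 0 →
          (∑ V : Fin n → ZMod 2, α V * α (V + U)) = 0) :=
  stmt_0_general S hS0 hSmul hind α A hA
end

section
/- Let U1, U2, U3, U4 ∈ (Fin n → ZMod 2) be pairwise distinct and let α1, α2, α3, α4 ∈ ℝ be all nonzero, and set A := α1 • S U1 + α2 • S U2 + α3 • S U3 + α4 • S U4. Then A² = 1 if and only if there exist V ∈ (Fin n → ZMod 2) and V1, V2 ∈ (Fin n → ZMod 2) with V1 ≠ V2, V1 ≠ 0, V2 ≠ 0, and a sign ε ∈ {1, −1} such that A = ε • ((1/2) • (S V * (−1 + S V1 + S V2 + S (V1 + V2)))). -/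
/-!
Write `ψ` for `S`, an additive character of an elementary abelian 2-group. Multiplying by
`ψ U₁`, which squares to `1` and commutes with every `ψ U`, does not change `A²` and turns `A`
into `a + b ψ p + c ψ q + d ψ r` with `p, q, r` distinct and nonzero. In the expansion of its
square, the coefficient `2ad` of `ψ r` can only be cancelled if `r = p + q`, so the support is
the Klein four-group `{0, p, q, p + q}`. Comparing the four remaining coefficients forces
`a, b, c, d = ±1/2` with an odd number of minus signs, which is the form
`ε/2 · ψ t · (-1 + ψ p + ψ q + ψ (p + q))`; conversely, `(-1 + x + y + xy)² = 4` whenever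
`x² = y² = 1` and `x, y` commute.
-/

theorem LinearIndependent.sum_filter_eq_ite {ι κ R M : Type*} [Ring R] [AddCommGroup M]
    [Module R M] [DecidableEq ι] {v : ι → M} (hv : LinearIndependent R v) {s : Finset κ}
    {w : κ → ι} {c : κ → R} {i₀ : ι} (h : ∑ k ∈ s, c k • v (w k) = v i₀) (i : ι) :
    ∑ k ∈ s with w k = i, c k = if i = i₀ then 1 else 0 := by
  have hf : ∑ k ∈ s, Finsupp.single (w k) (c k) = Finsupp.single i₀ 1 :=
    hv.finsuppLinearCombination_injective (by simpa [map_sum] using h)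
  simpa [Finset.sum_filter, Finsupp.single_apply, eq_comm] using DFunLike.congr_fun hf i

lemma exists_sign_of_klein_relations {K : Type*} [Field K] [CharZero K] {a b c d : K}
    (ha : a ≠ 0) (hc : c ≠ 0) (hd : d ≠ 0)
    (h₀ : a ^ 2 + b ^ 2 + c ^ 2 + d ^ 2 = 1) (h₁ : a * b + c * d = 0)
    (h₂ : a * c + b * d = 0) (h₃ : a * d + b * c = 0) :
    ∃ ε : K, (ε = 1 ∨ ε = -1) ∧
      ((a, b, c, d) = (-ε / 2, ε / 2, ε / 2, ε / 2) ∨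
        (a, b, c, d) = (ε / 2, -ε / 2, ε / 2, ε / 2) ∨
        (a, b, c, d) = (ε / 2, ε / 2, -ε / 2, ε / 2) ∨
        (a, b, c, d) = (ε / 2, ε / 2, ε / 2, -ε / 2)) := by
  have hab : a ^ 2 = b ^ 2 := mul_left_cancel₀ hc (by linear_combination a * h₂ - b * h₃)
  have hbc : b ^ 2 = c ^ 2 := mul_left_cancel₀ hd (by linear_combination b * h₂ - c * h₁)
  have hcd : c ^ 2 = d ^ 2 := mul_left_cancel₀ ha (by linear_combination c * h₂ - d * h₃)
  have half : ∀ x : K, x ^ 2 = (1 / 2) ^ 2 → x = 1 / 2 ∨ x = -(1 / 2) :=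
    fun x hx => sq_eq_sq_iff_eq_or_eq_neg.mp hx
  obtain rfl | rfl := half a (by linear_combination (h₀ + 3 * hab + 2 * hbc + hcd) / 4) <;>
  obtain rfl | rfl := half b (by linear_combination (h₀ - hab + 2 * hbc + hcd) / 4) <;>
  obtain rfl | rfl := half c (by linear_combination (h₀ - hab - 2 * hbc + hcd) / 4) <;>
  obtain rfl | rfl := half d (by linear_combination (h₀ - hab - 2 * hbc - 3 * hcd) / 4) <;>
  norm_num at *

namespace ZModModule

variable {G : Type*} [AddCommGroup G] [Module (ZMod 2) G]

lemma add_add_cancel_left (x y : G) : x + (x + y) = y := by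
  rw [← add_assoc, add_self, zero_add]

lemma add_eq_zero_iff_eq {x y : G} : x + y = 0 ↔ x = y := by
  rw [← sub_eq_add, sub_eq_zero]

end ZModModule

open ZModModule

namespace AddChar

section Monoid

variable {G M : Type*} [AddCommGroup G] [Monoid M] (ψ : AddChar G M)

lemma commute_apply (u v : G) : Commute (ψ u) (ψ v) := by
  rw [Commute, SemiconjBy, ← map_add_eq_mul, ← map_add_eq_mul, add_comm]

variable [Module (ZMod 2) G]

lemma apply_mul_self (u : G) : ψ u * ψ u = 1 := by
  rw [← map_add_eq_mul, add_self, map_zero_eq_one]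

lemma sq_apply_mul {u : G} {B : M} (h : Commute (ψ u) B) : (ψ u * B) ^ 2 = B ^ 2 := by
  rw [h.mul_pow, sq, apply_mul_self, one_mul]

end Monoid

section CommRing

variable {G R M : Type*} [AddCommGroup G] [CommRing R] [Ring M] [Algebra R M]
  (ψ : AddChar G M)

lemma commute_smul_add_three (u p q r : G) (a b c d : R) :
    Commute (ψ u) (a • 1 + b • ψ p + c • ψ q + d • ψ r) := by
  apply_rules [Commute.add_right, Commute.smul_right, Commute.one_right, commute_apply]

variable [Module (ZMod 2) G]

lemma sq_smul_add_three (a b c d : R) (p q r : G) :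
    (a • 1 + b • ψ p + c • ψ q + d • ψ r) ^ 2 =
      (a ^ 2 + b ^ 2 + c ^ 2 + d ^ 2) • 1 + (2 * a * b) • ψ p + (2 * a * c) • ψ q
        + (2 * a * d) • ψ r + (2 * b * c) • ψ (p + q) + (2 * b * d) • ψ (p + r)
        + (2 * c * d) • ψ (q + r) := by
  simp only [sq, add_mul, mul_add, smul_mul_smul_comm, one_mul, mul_one, ← map_add_eq_mul,
    add_self, map_zero_eq_one]
  rw [add_comm q p, add_comm r p, add_comm r q]
  module

lemma sq_smul_klein (a b c d : R) (p q : G) :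
    (a • 1 + b • ψ p + c • ψ q + d • ψ (p + q)) ^ 2 =
      (a ^ 2 + b ^ 2 + c ^ 2 + d ^ 2) • 1 + (2 * (a * b + c * d)) • ψ p
        + (2 * (a * c + b * d)) • ψ q + (2 * (a * d + b * c)) • ψ (p + q) := by
  rw [sq_smul_add_three, add_add_cancel_left, add_comm p q, add_add_cancel_left, add_comm q p]
  module

end CommRing

section Field

variable {G K M : Type*} [AddCommGroup G] [Module (ZMod 2) G] [Field K] [CharZero K] [Ring M]
  [Algebra K M] (ψ : AddChar G M)

lemma eq_add_of_sq_smul_add_three_eq_one (hψ : LinearIndependent K ψ) {a b c d : K}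
    (ha : a ≠ 0) (hd : d ≠ 0) {p q r : G} (hp : p ≠ 0) (hq : q ≠ 0) (hr : r ≠ 0)
    (hpr : p ≠ r) (hqr : q ≠ r) (h : (a • 1 + b • ψ p + c • ψ q + d • ψ r) ^ 2 = 1) :
    r = p + q := by
  classical
  by_contra hne
  rw [sq_smul_add_three] at h
  have hcoeff := hψ.sum_filter_eq_ite (s := Finset.univ) (i₀ := 0)
    (w := ![0, p, q, r, p + q, p + r, q + r])
    (c := ![a ^ 2 + b ^ 2 + c ^ 2 + d ^ 2, 2 * a * b, 2 * a * c, 2 * a * d, 2 * b * c,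
      2 * b * d, 2 * c * d])
    (by simpa [Fin.sum_univ_succ, add_assoc] using h) r
  simp [Finset.sum_filter, Fin.sum_univ_succ, hr, hr.symm, hpr, hqr, Ne.symm hne, hp, hq, ha,
    hd] at hcoeff

lemma klein_relations_of_sq_eq_one (hψ : LinearIndependent K ψ) {a b c d : K} {p q : G}
    (hp : p ≠ 0) (hq : q ≠ 0) (hpq : p ≠ q)
    (h : (a • 1 + b • ψ p + c • ψ q + d • ψ (p + q)) ^ 2 = 1) :
    a ^ 2 + b ^ 2 + c ^ 2 + d ^ 2 = 1 ∧ a * b + c * d = 0 ∧ a * c + b * d = 0 ∧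
      a * d + b * c = 0 := by
  classical
  rw [sq_smul_klein] at h
  have hcoeff := hψ.sum_filter_eq_ite (s := Finset.univ) (i₀ := 0) (w := ![0, p, q, p + q])
    (c := ![a ^ 2 + b ^ 2 + c ^ 2 + d ^ 2, 2 * (a * b + c * d), 2 * (a * c + b * d),
      2 * (a * d + b * c)])
    (by simpa [Fin.sum_univ_succ, add_assoc] using h)
  have hpq' : p + q ≠ 0 := add_eq_zero_iff_eq.not.mpr hpq
  have h₀ := hcoeff 0
  have h₁ := hcoeff p
  have h₂ := hcoeff q
  have h₃ := hcoeff (p + q)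
  simp [Finset.sum_filter, Fin.sum_univ_succ, hp, hq, hpq, hpq', hp.symm, hq.symm, hpq.symm,
    hpq'.symm] at h₀ h₁ h₂ h₃
  exact ⟨h₀, h₁, h₂, h₃⟩

lemma exists_eq_smul_mul_of_sq_eq_one (hψ : LinearIndependent K ψ) {a b c d : K}
    (ha : a ≠ 0) (hc : c ≠ 0) (hd : d ≠ 0) {p q r : G} (hp : p ≠ 0) (hq : q ≠ 0)
    (hr : r ≠ 0) (hpq : p ≠ q) (hpr : p ≠ r) (hqr : q ≠ r)
    (h : (a • 1 + b • ψ p + c • ψ q + d • ψ r) ^ 2 = 1) :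
    ∃ (t : G) (ε : K), (ε = 1 ∨ ε = -1) ∧
      a • 1 + b • ψ p + c • ψ q + d • ψ r =
        ε • (1 / 2 : K) • (ψ t * (-1 + ψ p + ψ q + ψ (p + q))) := by
  obtain rfl := ψ.eq_add_of_sq_smul_add_three_eq_one hψ ha hd hp hq hr hpr hqr h
  obtain ⟨h₀, h₁, h₂, h₃⟩ := ψ.klein_relations_of_sq_eq_one hψ hp hq hpq h
  obtain ⟨ε, hε, hsign⟩ := exists_sign_of_klein_relations ha hc hd h₀ h₁ h₂ h₃
  simp only [Prod.mk.injEq] at hsign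
  rcases hsign with ⟨rfl, rfl, rfl, rfl⟩ | ⟨rfl, rfl, rfl, rfl⟩ | ⟨rfl, rfl, rfl, rfl⟩ |
    ⟨rfl, rfl, rfl, rfl⟩
  · exact ⟨0, ε, hε, by simp only [map_zero_eq_one, one_mul]; module⟩
  · refine ⟨p, ε, hε, ?_⟩
    simp only [mul_add, mul_neg, mul_one, ← map_add_eq_mul, add_self, add_add_cancel_left,
      map_zero_eq_one]
    module
  · refine ⟨q, ε, hε, ?_⟩
    simp only [mul_add, mul_neg, mul_one, ← map_add_eq_mul, add_self, add_comm q p,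
      add_left_comm q p q, add_zero, map_zero_eq_one]
    module
  · refine ⟨p + q, ε, hε, ?_⟩
    simp only [mul_add, mul_neg, mul_one, ← map_add_eq_mul, add_self, add_right_comm p q p,
      add_assoc p q q, zero_add, add_zero, map_zero_eq_one]
    module

lemma sq_smul_smul_mul_klein {ε : K} (hε : ε = 1 ∨ ε = -1) (t p q : G) :
    (ε • (1 / 2 : K) • (ψ t * (-1 + ψ p + ψ q + ψ (p + q)))) ^ 2 = 1 := by
  have hX : (-1 : M) + ψ p + ψ q + ψ (p + q) =
      (-1 : K) • 1 + (1 : K) • ψ p + (1 : K) • ψ q + (1 : K) • ψ (p + q) := by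
    simp only [neg_smul, one_smul]
  rw [smul_pow, smul_pow, hX, ψ.sq_apply_mul (ψ.commute_smul_add_three _ _ _ _ _ _ _ _),
    sq_smul_klein]
  rcases hε with rfl | rfl <;> norm_num [smul_smul]

end Field

end AddChar

theorem stmt_2_general {n : ℕ} {M : Type*} [Ring M] [Algebra ℝ M]
    (S : (Fin n → ZMod 2) → M)
    (hS0 : S 0 = 1)
    (hSmul : ∀ U V : Fin n → ZMod 2, S (U + V) = S U * S V)
    (hind : LinearIndependent ℝ S)
    (U1 U2 U3 U4 : Fin n → ZMod 2)
    (h12 : U1 ≠ U2) (h13 : U1 ≠ U3) (h14 : U1 ≠ U4)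
    (h23 : U2 ≠ U3) (h24 : U2 ≠ U4) (h34 : U3 ≠ U4)
    (α1 α2 α3 α4 : ℝ)
    (hα1 : α1 ≠ 0) (hα3 : α3 ≠ 0) (hα4 : α4 ≠ 0)
    (A : M) (hA : A = α1 • S U1 + α2 • S U2 + α3 • S U3 + α4 • S U4) :
    A ^ 2 = 1 ↔
      ∃ (V V1 V2 : Fin n → ZMod 2) (ε : ℝ),
        V1 ≠ V2 ∧ V1 ≠ 0 ∧ V2 ≠ 0 ∧ (ε = 1 ∨ ε = -1) ∧
        A = ε • ((1 / 2 : ℝ) • (S V * (-1 + S V1 + S V2 + S (V1 + V2)))) := by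
  obtain ⟨ψ, rfl⟩ : ∃ ψ : AddChar (Fin n → ZMod 2) M, ⇑ψ = S := ⟨⟨S, hS0, hSmul⟩, rfl⟩
  have hS : ∀ U, ψ U = ψ U1 * ψ (U1 + U) := fun U => by
    rw [← ψ.map_add_eq_mul, add_add_cancel_left]
  have hA' : A = ψ U1 * (α1 • 1 + α2 • ψ (U1 + U2) + α3 • ψ (U1 + U3) + α4 • ψ (U1 + U4)) := by
    rw [hA, hS U1, hS U2, hS U3, hS U4, add_self, ψ.map_zero_eq_one]
    simp only [mul_add, mul_smul_comm, mul_one]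
  have hne : ∀ {U U' : Fin n → ZMod 2}, U ≠ U' → U + U' ≠ 0 :=
    fun h => add_eq_zero_iff_eq.not.mpr h
  have hcancel : ∀ {U U'}, U ≠ U' → U1 + U ≠ U1 + U' := (add_right_injective U1).ne
  constructor
  · intro h
    rw [hA', ψ.sq_apply_mul (ψ.commute_smul_add_three _ _ _ _ _ _ _ _)] at h
    obtain ⟨t, ε, hε, ht⟩ := ψ.exists_eq_smul_mul_of_sq_eq_one hind hα1 hα3 hα4
      (hne h12) (hne h13) (hne h14) (hcancel h23) (hcancel h24) (hcancel h34) h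
    refine ⟨U1 + t, U1 + U2, U1 + U3, ε, hcancel h23, hne h12, hne h13, hε, ?_⟩
    rw [hA', ht, ψ.map_add_eq_mul U1 t, mul_assoc, mul_smul_comm, mul_smul_comm]
  · rintro ⟨V, V1, V2, ε, -, -, -, hε, rfl⟩
    exact ψ.sq_smul_smul_mul_klein hε V V1 V2

theorem stmt_2 {n : ℕ} (hn : 1 ≤ n) {M : Type*} [Ring M] [Algebra ℝ M]
    (S : (Fin n → ZMod 2) → M)
    (hS0 : S 0 = 1)
    (hSmul : ∀ U V : Fin n → ZMod 2, S (U + V) = S U * S V)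
    (hind : LinearIndependent ℝ S)
    (U1 U2 U3 U4 : Fin n → ZMod 2)
    (h12 : U1 ≠ U2) (h13 : U1 ≠ U3) (h14 : U1 ≠ U4)
    (h23 : U2 ≠ U3) (h24 : U2 ≠ U4) (h34 : U3 ≠ U4)
    (α1 α2 α3 α4 : ℝ)
    (hα1 : α1 ≠ 0) (hα2 : α2 ≠ 0) (hα3 : α3 ≠ 0) (hα4 : α4 ≠ 0)
    (A : M) (hA : A = α1 • S U1 + α2 • S U2 + α3 • S U3 + α4 • S U4) :
    A ^ 2 = 1 ↔
      ∃ (V V1 V2 : Fin n → ZMod 2) (ε : ℝ),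
        V1 ≠ V2 ∧ V1 ≠ 0 ∧ V2 ≠ 0 ∧ (ε = 1 ∨ ε = -1) ∧
        A = ε • ((1 / 2 : ℝ) • (S V * (-1 + S V1 + S V2 + S (V1 + V2)))) :=
  stmt_2_general S hS0 hSmul hind U1 U2 U3 U4 h12 h13 h14 h23 h24 h34 α1 α2 α3 α4 hα1 hα3 hα4 A hA
end

section
/- Let α1, α2, α3, α4 ∈ ℝ be all nonzero and satisfy α1² + α2² + α3² + α4² = 1, α1*α2 + α3*α4 = 0, α1*α3 + α2*α4 = 0, and α1*α4 + α2*α3 = 0. Then (α1, α2, α3, α4) is one of the eight quadruples ±(1/2)•(−1,1,1,1), ±(1/2)•(1,−1,1,1), ±(1/2)•(1,1,−1,1), ±(1/2)•(1,1,1,−1). -/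
/-!
Adding and subtracting the last two relations factors them as
`(α1 + α2) (α3 + α4) = 0` and `(α1 - α2) (α3 - α4) = 0`. Since `α1` and `α3` are nonzero,
the quadruple is `(a, -a, b, b)` or `(a, a, b, -b)`. The first relation then gives `a² = b²`
and the normalisation `4 a² = 1`, so `a, b = ±1/2`.
-/

variable {K : Type*} [Field K] [CharZero K]

theorem eq_neg_and_eq_or_eq_and_eq_neg {α1 α2 α3 α4 : K} (hα1 : α1 ≠ 0) (hα3 : α3 ≠ 0)
    (h2 : α1 * α3 + α2 * α4 = 0) (h3 : α1 * α4 + α2 * α3 = 0) :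
    (α2 = -α1 ∧ α4 = α3) ∨ (α2 = α1 ∧ α4 = -α3) := by
  have hplus : (α1 + α2) * (α3 + α4) = 0 := by linear_combination h2 + h3
  have hminus : (α1 - α2) * (α3 - α4) = 0 := by linear_combination h2 - h3
  rcases mul_eq_zero.1 hplus with h12 | h34 <;> rcases mul_eq_zero.1 hminus with h12' | h34'
  · exact absurd (by linear_combination (h12 + h12') / 2) hα1
  · exact Or.inl ⟨by linear_combination h12, by linear_combination -h34'⟩
  · exact Or.inr ⟨by linear_combination -h12', by linear_combination h34⟩
  · exact absurd (by linear_combination (h34 + h34') / 2) hα3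

theorem eq_half_or_eq_neg_half_of_sq_eq_sq {a b : K} (hsum : 2 * a ^ 2 + 2 * b ^ 2 = 1)
    (hab : a ^ 2 = b ^ 2) : a = 1 / 2 ∨ a = -(1 / 2) :=
  sq_eq_sq_iff_eq_or_eq_neg.1 (by linear_combination (hsum + 2 * hab) / 4)

theorem stmt_5_general (α1 α2 α3 α4 : ℝ)
    (hα1 : α1 ≠ 0) (hα3 : α3 ≠ 0)
    (hsum : α1 ^ 2 + α2 ^ 2 + α3 ^ 2 + α4 ^ 2 = 1)
    (h1 : α1 * α2 + α3 * α4 = 0)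
    (h2 : α1 * α3 + α2 * α4 = 0)
    (h3 : α1 * α4 + α2 * α3 = 0) :
    (α1, α2, α3, α4) = (-(1 / 2), 1 / 2, 1 / 2, 1 / 2) ∨
    (α1, α2, α3, α4) = (1 / 2, -(1 / 2), -(1 / 2), -(1 / 2)) ∨
    (α1, α2, α3, α4) = (1 / 2, -(1 / 2), 1 / 2, 1 / 2) ∨
    (α1, α2, α3, α4) = (-(1 / 2), 1 / 2, -(1 / 2), -(1 / 2)) ∨
    (α1, α2, α3, α4) = (1 / 2, 1 / 2, -(1 / 2), 1 / 2) ∨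
    (α1, α2, α3, α4) = (-(1 / 2), -(1 / 2), 1 / 2, -(1 / 2)) ∨
    (α1, α2, α3, α4) = (1 / 2, 1 / 2, 1 / 2, -(1 / 2)) ∨
    (α1, α2, α3, α4) = (-(1 / 2), -(1 / 2), -(1 / 2), 1 / 2) := by
  obtain ⟨hα2, hα4⟩ | ⟨hα2, hα4⟩ := eq_neg_and_eq_or_eq_and_eq_neg hα1 hα3 h2 h3 <;>
    subst α2 α4
  · have hsq : α1 ^ 2 = α3 ^ 2 := by linear_combination -h1
    rcases eq_half_or_eq_neg_half_of_sq_eq_sq (by linear_combination hsum) hsq with rfl | rfl <;>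
      rcases eq_half_or_eq_neg_half_of_sq_eq_sq (by linear_combination hsum) hsq.symm
        with rfl | rfl <;> norm_num
  · have hsq : α1 ^ 2 = α3 ^ 2 := by linear_combination h1
    rcases eq_half_or_eq_neg_half_of_sq_eq_sq (by linear_combination hsum) hsq with rfl | rfl <;>
      rcases eq_half_or_eq_neg_half_of_sq_eq_sq (by linear_combination hsum) hsq.symm
        with rfl | rfl <;> norm_num

theorem stmt_5 (α1 α2 α3 α4 : ℝ)
    (hα1 : α1 ≠ 0) (hα2 : α2 ≠ 0) (hα3 : α3 ≠ 0) (hα4 : α4 ≠ 0)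
    (hsum : α1 ^ 2 + α2 ^ 2 + α3 ^ 2 + α4 ^ 2 = 1)
    (h1 : α1 * α2 + α3 * α4 = 0)
    (h2 : α1 * α3 + α2 * α4 = 0)
    (h3 : α1 * α4 + α2 * α3 = 0) :
    (α1, α2, α3, α4) = (-(1 / 2), 1 / 2, 1 / 2, 1 / 2) ∨
    (α1, α2, α3, α4) = (1 / 2, -(1 / 2), -(1 / 2), -(1 / 2)) ∨
    (α1, α2, α3, α4) = (1 / 2, -(1 / 2), 1 / 2, 1 / 2) ∨
    (α1, α2, α3, α4) = (-(1 / 2), 1 / 2, -(1 / 2), -(1 / 2)) ∨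
    (α1, α2, α3, α4) = (1 / 2, 1 / 2, -(1 / 2), 1 / 2) ∨
    (α1, α2, α3, α4) = (-(1 / 2), -(1 / 2), 1 / 2, -(1 / 2)) ∨
    (α1, α2, α3, α4) = (1 / 2, 1 / 2, 1 / 2, -(1 / 2)) ∨
    (α1, α2, α3, α4) = (-(1 / 2), -(1 / 2), -(1 / 2), 1 / 2) :=
  stmt_5_general α1 α2 α3 α4 hα1 hα3 hsum h1 h2 h3
end

section
/- There is no 'type-3 observable': there do not exist pairwise distinct U1, U2, U3 ∈ (Fin n → ZMod 2) and nonzero reals α1, α2, α3 such that (α1 • S U1 + α2 • S U2 + α3 • S U3)² = 1. -/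
/-!
Expanding the square of `α₁ S U₁ + α₂ S U₂ + α₃ S U₃` with `S U * S V = S (U + V)` and
`U + U = 0` gives `(∑ αᵢ²) S 0 + 2α₁α₂ S (U₁ + U₂) + 2α₁α₃ S (U₁ + U₃) + 2α₂α₃ S (U₂ + U₃)`.
For distinct `Uᵢ` the four indices `0, U₁ + U₂, U₁ + U₃, U₂ + U₃` are distinct, so comparing with
`1 = S 0` and using linear independence forces `2α₁α₂ = 0`.
-/

theorem LinearIndependent.coeff_eq_zero_of_smul_add_smul_add_smul_add_smul {ι R V : Type*}
    [Ring R] [AddCommGroup V] [Module R V] {v : ι → V} (hv : LinearIndependent R v)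
    {i j k l : ι} (hij : i ≠ j) (hjk : j ≠ k) (hjl : j ≠ l) {a b c d : R}
    (h : a • v i + b • v j + c • v k + d • v l = 0) : b = 0 := by
  classical
  set f : ι →₀ R :=
    Finsupp.single i a + Finsupp.single j b + Finsupp.single k c + Finsupp.single l d
  have hf : Finsupp.linearCombination R v f = 0 := by
    simpa only [f, map_add, Finsupp.linearCombination_single] using h
  have hfj := DFunLike.congr_fun (linearIndependent_iff.mp hv f hf) j
  simpa [f, Finsupp.single_apply, hij, hjk.symm, hjl.symm] using hfj

section ThreeTermSquare

variable {G R M : Type*} [AddCommGroup G] [CommRing R] [Ring M] [Algebra R M]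

theorem sq_smul_add_smul_add_smul_of_add_self {S : G → M}
    (hSmul : ∀ U V, S (U + V) = S U * S V) (hself : ∀ U : G, U + U = 0)
    (U₁ U₂ U₃ : G) (α₁ α₂ α₃ : R) :
    (α₁ • S U₁ + α₂ • S U₂ + α₃ • S U₃) ^ 2 =
      (α₁ ^ 2 + α₂ ^ 2 + α₃ ^ 2) • S 0 + (2 * α₁ * α₂) • S (U₁ + U₂)
        + (2 * α₁ * α₃) • S (U₁ + U₃) + (2 * α₂ * α₃) • S (U₂ + U₃) := by
  have hmul : ∀ U V, S U * S V = S (U + V) := fun U V => (hSmul U V).symm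
  simp only [sq, add_mul, mul_add, smul_mul_smul_comm, hmul, hself, add_comm U₂ U₁,
    add_comm U₃ U₁, add_comm U₃ U₂]
  module

theorem add_ne_zero_of_ne_of_add_self {U V : G} (hself : ∀ U : G, U + U = 0) (h : U ≠ V) :
    U + V ≠ 0 := fun hUV =>
  h (by rw [add_eq_zero_iff_eq_neg.mp hUV, neg_eq_of_add_eq_zero_right (hself V)])

end ThreeTermSquare

theorem stmt_7_general {n : ℕ} {M : Type*} [Ring M] [Algebra ℝ M]
    (S : (Fin n → ZMod 2) → M)
    (hS0 : S 0 = 1)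
    (hSmul : ∀ U V : Fin n → ZMod 2, S (U + V) = S U * S V)
    (hind : LinearIndependent ℝ S) :
    ¬ ∃ (U1 U2 U3 : Fin n → ZMod 2) (α1 α2 α3 : ℝ),
        U1 ≠ U2 ∧ U1 ≠ U3 ∧ U2 ≠ U3 ∧ α1 ≠ 0 ∧ α2 ≠ 0 ∧ α3 ≠ 0 ∧
        (α1 • S U1 + α2 • S U2 + α3 • S U3) ^ 2 = 1 := by
  rintro ⟨U1, U2, U3, α1, α2, α3, h12, h13, h23, hα1, hα2, -, hsq⟩
  have hself : ∀ U : Fin n → ZMod 2, U + U = 0 := fun U =>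
    funext fun i => CharTwo.add_self_eq_zero (U i)
  rw [sq_smul_add_smul_add_smul_of_add_self hSmul hself, ← hS0] at hsq
  have hrel : (α1 ^ 2 + α2 ^ 2 + α3 ^ 2 - 1) • S 0 + (2 * α1 * α2) • S (U1 + U2)
      + (2 * α1 * α3) • S (U1 + U3) + (2 * α2 * α3) • S (U2 + U3) = 0 := by
    linear_combination (norm := module) hsq
  have hcoeff := hind.coeff_eq_zero_of_smul_add_smul_add_smul_add_smul
    (add_ne_zero_of_ne_of_add_self hself h12).symm
    (fun h => h23 (add_left_cancel h))
    (fun h => h13 (add_right_cancel (h.trans (add_comm U2 U3))))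
    hrel
  exact mul_ne_zero (mul_ne_zero two_ne_zero hα1) hα2 hcoeff

theorem stmt_7 {n : ℕ} (hn : 1 ≤ n) {M : Type*} [Ring M] [Algebra ℝ M]
    (S : (Fin n → ZMod 2) → M)
    (hS0 : S 0 = 1)
    (hSmul : ∀ U V : Fin n → ZMod 2, S (U + V) = S U * S V)
    (hind : LinearIndependent ℝ S) :
    ¬ ∃ (U1 U2 U3 : Fin n → ZMod 2) (α1 α2 α3 : ℝ),
        U1 ≠ U2 ∧ U1 ≠ U3 ∧ U2 ≠ U3 ∧ α1 ≠ 0 ∧ α2 ≠ 0 ∧ α3 ≠ 0 ∧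
        (α1 • S U1 + α2 • S U2 + α3 • S U3) ^ 2 = 1 :=
  stmt_7_general S hS0 hSmul hind
end

section
/- Fix V1, V2 ∈ (Fin n → ZMod 2) and let G ∈ M satisfy G * S V1 = S V1 * G and G * S V2 = −(S V2 * G) (G commutes with S V1 and anticommutes with S V2). Then T V1 V2 * G = −(S V1 * (G * T V1 V2)) = −(G * (S V1 * T V1 V2)) = −(G * (T V1 V2 * S V1)). -/
/-!
Write `a = S V1`, `b = S V2`, so `a² = 1`, `ab = ba` and `T = ½ (-1 + a + b + ab)`. Moving `G`
across `T` flips the sign of the terms containing `b`: `G T = ½ (-1 + a - b - ab) G`, and since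
`a² = 1`, `a · ½ (-1 + a - b - ab) = -T`. Hence `T G = -a G T`; the other two forms follow
because `a` commutes with both `G` and `T`.
-/

section MapAdd

variable {A M : Type*} [Monoid M] {S : A → M}

theorem commute_of_map_add [AddCommMagma A] (hS : ∀ U V, S (U + V) = S U * S V) (U V : A) :
    Commute (S U) (S V) := by
  rw [Commute, SemiconjBy, ← hS, ← hS, add_comm]

theorem mul_self_of_map_add [AddZeroClass A] (hS0 : S 0 = 1) (hS : ∀ U V, S (U + V) = S U * S V)
    {U : A} (hU : U + U = 0) : S U * S U = 1 := by
  rw [← hS, hU, hS0]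

end MapAdd

theorem mul_eq_neg_mul_mul_of_anticommute {M : Type*} [Ring M] {a b g : M} (ha : a * a = 1)
    (hab : Commute a b) (hga : Commute g a) (hgb : g * b = -(b * g)) :
    (-1 + a + b + a * b) * g = -(a * (g * (-1 + a + b + a * b))) := by
  have hflip : g * (-1 + a + b + a * b) = (-1 + a - b - a * b) * g := by
    simp only [mul_add, add_mul, sub_mul, mul_neg, neg_mul, mul_one, one_mul, ← mul_assoc,
      hga.eq, hgb]
    rw [mul_assoc, hgb, mul_neg, ← mul_assoc]
    abel
  have hback : a * (-1 + a - b - a * b) = -(-1 + a + b + a * b) := by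
    rw [mul_sub, mul_sub, mul_add, ← mul_assoc, ha, hab.eq]
    noncomm_ring
  rw [hflip, ← mul_assoc, hback, neg_mul, neg_neg]

theorem stmt_9_general {n : ℕ} {M : Type*} [Ring M] [Algebra ℝ M]
    (S : (Fin n → ZMod 2) → M)
    (hS0 : S 0 = 1)
    (hSmul : ∀ U V : Fin n → ZMod 2, S (U + V) = S U * S V)
    (V1 V2 : Fin n → ZMod 2)
    (T : M) (hT : T = (1 / 2 : ℝ) • (-1 + S V1 + S V2 + S (V1 + V2)))
    (G : M)
    (hG1 : G * S V1 = S V1 * G)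
    (hG2 : G * S V2 = -(S V2 * G)) :
    T * G = -(S V1 * (G * T)) ∧
    T * G = -(G * (S V1 * T)) ∧
    T * G = -(G * (T * S V1)) := by
  have hsq : S V1 * S V1 = 1 :=
    mul_self_of_map_add hS0 hSmul (funext fun i => CharTwo.add_self_eq_zero (V1 i))
  have hab : Commute (S V1) (S V2) := commute_of_map_add hSmul V1 V2
  rw [hSmul] at hT
  have hTa : Commute T (S V1) := by
    rw [hT]
    exact (((((Commute.one_left _).neg_left).add_left (Commute.refl _)).add_left hab.symm).add_left
      ((Commute.refl _).mul_left hab.symm)).smul_left _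
  have hTG : T * G = -(S V1 * (G * T)) := by
    rw [hT, smul_mul_assoc, mul_eq_neg_mul_mul_of_anticommute hsq hab hG1 hG2, mul_smul_comm,
      mul_smul_comm, smul_neg]
  have hGa : S V1 * (G * T) = G * (S V1 * T) := by rw [← mul_assoc, ← mul_assoc, hG1]
  exact ⟨hTG, hTG.trans (by rw [hGa]), hTG.trans (by rw [hGa, hTa.eq])⟩

theorem stmt_9 {n : ℕ} (hn : 1 ≤ n) {M : Type*} [Ring M] [Algebra ℝ M]
    (S : (Fin n → ZMod 2) → M)
    (hS0 : S 0 = 1)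
    (hSmul : ∀ U V : Fin n → ZMod 2, S (U + V) = S U * S V)
    (V1 V2 : Fin n → ZMod 2)
    (T : M) (hT : T = (1 / 2 : ℝ) • (-1 + S V1 + S V2 + S (V1 + V2)))
    (G : M)
    (hG1 : G * S V1 = S V1 * G)
    (hG2 : G * S V2 = -(S V2 * G)) :
    T * G = -(S V1 * (G * T)) ∧
    T * G = -(G * (S V1 * T)) ∧
    T * G = -(G * (T * S V1)) :=
  stmt_9_general S hS0 hSmul V1 V2 T hT G hG1 hG2
end

section
/- Fix V, V1, V2 ∈ (Fin n → ZMod 2). If ⟨C i, V⟩ = p i for every i : Fin K, then (S V * T V1 V2) (W i ψ) = W i ψ for every i : Fin K, i.e., the type-4 operator S V * T V1 V2 stabilizes the CWS code spanned by the vectors W i ψ. -/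
/-!
Each vector `W i ψ` is a common eigenvector of the stabilizers: `S V'` and `W i` commute up to the
sign `(-1)^⟨C i, V'⟩` and `S V'` fixes `ψ`, so `S V' (W i ψ) = (-1)^⟨C i, V'⟩ • W i ψ`. Hence
`T V1 V2` acts on `W i ψ` by `(-1 + a + b + a b) / 2` with `a, b = ±1`, which is `1` when `a = b = 1`
and `-1` otherwise, i.e. by `(-1)^(p i)`. Since `⟨C i, V⟩ = p i`, the sign of `S V` cancels it.
-/

/-- `(-1)^x` for `x : ZMod 2`, as a real number. -/
def zmodTwoSign (x : ZMod 2) : ℝ := if x = 0 then 1 else -1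

lemma zmodTwoSign_mul_self (x : ZMod 2) : zmodTwoSign x * zmodTwoSign x = 1 := by
  unfold zmodTwoSign; split_ifs <;> norm_num

lemma half_mul_neg_one_add_zmodTwoSign (x y : ZMod 2) :
    (1 / 2 : ℝ) * (-1 + zmodTwoSign x + zmodTwoSign y + zmodTwoSign (x + y)) =
      zmodTwoSign (if x = 0 ∧ y = 0 then 0 else 1) := by
  have hcases : ∀ z : ZMod 2, z = 0 ∨ z = 1 := by decide
  have hone_add_one : (1 : ZMod 2) + 1 = 0 := rfl
  rcases hcases x with rfl | rfl <;> rcases hcases y with rfl | rfl <;>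
    simp only [zmodTwoSign, hone_add_one, add_zero, zero_add] <;> norm_num

lemma Module.End.apply_eq_smul_of_mul_eq_smul_mul {R 𝕜 M : Type*} [Semiring R] [Monoid 𝕜]
    [AddCommMonoid M] [Module R M] [DistribMulAction 𝕜 M] [SMulCommClass R 𝕜 M]
    {f g : Module.End R M} {ε : 𝕜} (hε : ε * ε = 1) (hgf : g * f = ε • (f * g))
    {ψ : M} (hψ : f ψ = ψ) : f (g ψ) = ε • g ψ := by
  have hfg : f * g = ε • (g * f) := by rw [hgf, smul_smul, hε, one_smul]
  simpa [hψ] using LinearMap.congr_fun hfg ψ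

theorem stmt_10_general {n K : ℕ}
    {H : Type*} [AddCommGroup H] [Module ℂ H]
    (S : (Fin n → ZMod 2) → Module.End ℂ H)
    (ψ : H) (hψ : ∀ V : Fin n → ZMod 2, S V ψ = ψ)
    (C : Fin K → (Fin n → ZMod 2))
    (W : Fin K → Module.End ℂ H)
    (hW : ∀ (i : Fin K) (V : Fin n → ZMod 2),
      W i * S V = (if (∑ k, C i k * V k) = 0 then (1 : ℝ) else -1) • (S V * W i))
    (V V1 V2 : Fin n → ZMod 2)
    (p : Fin K → ZMod 2)
    (hp : ∀ i : Fin K,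
      p i = if (∑ k, C i k * V1 k) = 0 ∧ (∑ k, C i k * V2 k) = 0 then 0 else 1)
    (T : Module.End ℂ H)
    (hT : T = (1 / 2 : ℝ) • (-1 + S V1 + S V2 + S (V1 + V2)))
    (hCV : ∀ i : Fin K, (∑ k, C i k * V k) = p i) :
    ∀ i : Fin K, (S V * T) (W i ψ) = W i ψ := by
  intro i
  have hEigen (U : Fin n → ZMod 2) :
      S U (W i ψ) = zmodTwoSign (C i ⬝ᵥ U) • W i ψ :=
    Module.End.apply_eq_smul_of_mul_eq_smul_mul (zmodTwoSign_mul_self _) (hW i U) (hψ U)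
  have hTEigen : T (W i ψ) = zmodTwoSign (p i) • W i ψ := by
    rw [hp i, ← dotProduct, ← dotProduct, ← half_mul_neg_one_add_zmodTwoSign, ← dotProduct_add,
      hT]
    simp only [LinearMap.smul_apply, LinearMap.add_apply, LinearMap.neg_apply,
      Module.End.one_apply, hEigen]
    module
  rw [Module.End.mul_apply, hTEigen, LinearMap.map_smul_of_tower, hEigen, smul_smul,
    dotProduct, hCV, zmodTwoSign_mul_self, one_smul]

theorem stmt_10 {n K : ℕ} (hn : 1 ≤ n) (hK : 1 ≤ K)
    {H : Type*} [AddCommGroup H] [Module ℂ H]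
    (S : (Fin n → ZMod 2) → Module.End ℂ H)
    (hS0 : S 0 = 1)
    (hSmul : ∀ U V : Fin n → ZMod 2, S (U + V) = S U * S V)
    (ψ : H) (hψ : ∀ V : Fin n → ZMod 2, S V ψ = ψ)
    (C : Fin K → (Fin n → ZMod 2))
    (W : Fin K → Module.End ℂ H)
    (hW : ∀ (i : Fin K) (V : Fin n → ZMod 2),
      W i * S V = (if (∑ k, C i k * V k) = 0 then (1 : ℝ) else -1) • (S V * W i))
    (V V1 V2 : Fin n → ZMod 2)
    (p : Fin K → ZMod 2)
    (hp : ∀ i : Fin K,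
      p i = if (∑ k, C i k * V1 k) = 0 ∧ (∑ k, C i k * V2 k) = 0 then 0 else 1)
    (T : Module.End ℂ H)
    (hT : T = (1 / 2 : ℝ) • (-1 + S V1 + S V2 + S (V1 + V2)))
    (hCV : ∀ i : Fin K, (∑ k, C i k * V k) = p i) :
    ∀ i : Fin K, (S V * T) (W i ψ) = W i ψ :=
  stmt_10_general S ψ hψ C W hW V V1 V2 p hp T hT hCV
end

section
/- Fix V ∈ (Fin n → ZMod 2) with ⟨C i, V⟩ = 0 for all i : Fin K (i.e., S V lies in the normalizer of the codeword operators inside the stabilizer). Then for every e : Fin m and every i : Fin K, (S V) (E e (W i ψ)) = (−1)^{⟨u e, V⟩} • (E e (W i ψ)); in particular S V can be used as a decoding observable, since for each fixed e the vectors E e (W i ψ) all lie in a single eigenspace of S V. -/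
/-!
If `A * B = c • (B * A)` with `c * c = 1`, then `A` maps the fixed vectors of `B` into the
`c`-eigenspace of `B`. Applied with `c = 1` to `W i` (which commutes with `S V` because
`⟨C i, V⟩ = 0`), `W i ψ` is fixed by `S V`; applied with `c = (−1)^⟨u e, V⟩` to `E e`, it puts
`E e (W i ψ)` in that eigenspace of `S V`.
-/

theorem ite_one_neg_one_mul_self {R : Type*} [Ring R] (p : Prop) [Decidable p] :
    (if p then (1 : R) else -1) * (if p then 1 else -1) = 1 := by
  split_ifs <;> simp

theorem Module.End.apply_apply_eq_smul_of_mul_eq_smul_mul {R S M : Type*} [Semiring R]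
    [AddCommMonoid M] [Module R M] [Monoid S] [DistribMulAction S M] [SMulCommClass R S M]
    {A B : Module.End R M} {c : S} (hc : c * c = 1) (hAB : A * B = c • (B * A)) {x : M}
    (hx : B x = x) : B (A x) = c • A x := by
  have hAx : A x = c • B (A x) := by
    simpa only [Module.End.mul_apply, LinearMap.smul_apply, hx] using LinearMap.congr_fun hAB x
  conv_rhs => rw [hAx, smul_smul, hc, one_smul]

theorem stmt_14_general {n K m : ℕ}
    {H : Type*} [AddCommGroup H] [Module ℂ H]
    (S : (Fin n → ZMod 2) → Module.End ℂ H)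
    (ψ : H) (hψ : ∀ V : Fin n → ZMod 2, S V ψ = ψ)
    (C : Fin K → (Fin n → ZMod 2))
    (W : Fin K → Module.End ℂ H)
    (hW : ∀ (i : Fin K) (V : Fin n → ZMod 2),
      W i * S V = (if (∑ k, C i k * V k) = 0 then (1 : ℝ) else -1) • (S V * W i))
    (E : Fin m → Module.End ℂ H)
    (u : Fin m → (Fin n → ZMod 2))
    (hE : ∀ (e : Fin m) (V : Fin n → ZMod 2),
      E e * S V = (if (∑ k, u e k * V k) = 0 then (1 : ℝ) else -1) • (S V * E e))
    (V : Fin n → ZMod 2)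
    (hCV : ∀ i : Fin K, (∑ k, C i k * V k) = 0) :
    ∀ (e : Fin m) (i : Fin K),
      (S V) (E e (W i ψ)) =
        (if (∑ k, u e k * V k) = 0 then (1 : ℝ) else -1) • (E e (W i ψ)) := by
  intro e i
  have hWV : W i * S V = (1 : ℝ) • (S V * W i) := by simpa only [hCV i, if_true] using hW i V
  have hWψ : S V (W i ψ) = W i ψ := by
    simpa only [one_smul] using
      Module.End.apply_apply_eq_smul_of_mul_eq_smul_mul (mul_one (1 : ℝ)) hWV (hψ V)
  exact Module.End.apply_apply_eq_smul_of_mul_eq_smul_mul (ite_one_neg_one_mul_self _) (hE e V) hWψ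

theorem stmt_14 {n K m : ℕ} (hn : 1 ≤ n) (hK : 1 ≤ K) (hm : 1 ≤ m)
    {H : Type*} [AddCommGroup H] [Module ℂ H]
    (S : (Fin n → ZMod 2) → Module.End ℂ H)
    (hS0 : S 0 = 1)
    (hSmul : ∀ U V : Fin n → ZMod 2, S (U + V) = S U * S V)
    (ψ : H) (hψ : ∀ V : Fin n → ZMod 2, S V ψ = ψ)
    (C : Fin K → (Fin n → ZMod 2))
    (W : Fin K → Module.End ℂ H)
    (hW : ∀ (i : Fin K) (V : Fin n → ZMod 2),
      W i * S V = (if (∑ k, C i k * V k) = 0 then (1 : ℝ) else -1) • (S V * W i))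
    (E : Fin m → Module.End ℂ H)
    (u : Fin m → (Fin n → ZMod 2))
    (hE : ∀ (e : Fin m) (V : Fin n → ZMod 2),
      E e * S V = (if (∑ k, u e k * V k) = 0 then (1 : ℝ) else -1) • (S V * E e))
    (V : Fin n → ZMod 2)
    (hCV : ∀ i : Fin K, (∑ k, C i k * V k) = 0) :
    ∀ (e : Fin m) (i : Fin K),
      (S V) (E e (W i ψ)) =
        (if (∑ k, u e k * V k) = 0 then (1 : ℝ) else -1) • (E e (W i ψ)) :=
  stmt_14_general S ψ hψ C W hW E u hE V hCV
end
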